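/- If x* is the unique optimal solution of the plain epsilon-constraint program min f1(x) subject to fi(x) ≤ ei, x ∈ S, then x* is Pareto optimal (not merely weakly Pareto optimal) for the multi-objective problem. -/
import Mathlib


/-- If `xstar` is the unique optimal solution of the plain epsilon-constraint program,
then it is Pareto optimal for the multi-objective problem. -/
theorem epsilon_constraint_unique_pareto
    {S : Type*} {n : ℕ} (Sset : Set S) (f : Fin (n + 1) → S → ℝ)
    (e : Fin (n + 1) → ℝ) (xstar : S)
    (hxS : xstar ∈ Sset)
    (hfeas : ∀ i : Fin (n + 1), i ≠ 0 → f i xstar ≤ e i)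
    (hopt : ∀ x ∈ Sset, (∀ i : Fin (n + 1), i ≠ 0 → f i x ≤ e i) →
      f 0 xstar ≤ f 0 x)
    (huniq : ∀ x ∈ Sset, (∀ i : Fin (n + 1), i ≠ 0 → f i x ≤ e i) →
      x ≠ xstar → f 0 xstar < f 0 x) :
    ¬ ∃ x ∈ Sset, (∀ i, f i x ≤ f i xstar) ∧ ∃ j, f j x < f j xstar := by
  rintro ⟨x, hxSet, hle, j, hj⟩
  have hfx : ∀ i : Fin (n + 1), i ≠ 0 → f i x ≤ e i :=
    fun i hi => (hle i).trans (hfeas i hi)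
  by_cases hx : x = xstar
  · subst hx; exact lt_irrefl _ hj
  · exact absurd (hle 0) (not_le.2 (huniq x hxSet hfx hx))
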